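/- arXiv:2403.09658 — 9 statements merged into one kernel-verified Lean document; each statement's English description precedes it below -/
import Mathlib

section
/- The Wronskian and Casoratian of 1, x, x^2, ..., x^n are equal: det(d^i/dx^i [x^j])_{0≤i,j≤n} = det((x+i)^j)_{0≤i,j≤n} for all real x. -/
lemma iteratedDeriv_cmul (c : ℝ) {f : ℝ → ℝ} {k : ℕ} (hf : ContDiff ℝ k f) (t : ℝ) :
    iteratedDeriv k (fun z => c * f z) t = c * iteratedDeriv k f t := by
  simp only [← iteratedDerivWithin_univ]
  exact iteratedDerivWithin_const_mul (Set.mem_univ t) uniqueDiffOn_univ c hf.contDiffWithinAt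

lemma iteratedDeriv_pow_aux (k m : ℕ) :
    iteratedDeriv k (fun t : ℝ => t ^ m) = fun t => (m.descFactorial k : ℝ) * t ^ (m - k) := by
  induction k generalizing m with
  | zero => simp
  | succ k ih =>
    rw [iteratedDeriv_succ']
    funext t
    cases m with
    | zero =>
      have h0 : deriv (fun t : ℝ => t ^ 0) = fun z : ℝ => (0 : ℝ) * (1 : ℝ) := by
        funext t; simp
      rw [h0, iteratedDeriv_cmul (0 : ℝ) contDiff_const t]
      simp
    | succ m =>
      have h1 : deriv (fun t : ℝ => t ^ (m + 1)) = fun t : ℝ => ((m : ℝ) + 1) * t ^ m := by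
        funext t; simp [deriv_pow]
      have hcd : ContDiff ℝ k (fun t : ℝ => t ^ m) := contDiff_id.pow m
      rw [h1, iteratedDeriv_cmul ((m : ℝ) + 1) hcd t, ih m,
        Nat.succ_descFactorial_succ, Nat.succ_sub_succ]
      push_cast
      ring

theorem wronskian_eq_casoratian_powers (n : ℕ) (x : ℝ) :
    (Matrix.of fun i j : Fin (n + 1) =>
        iteratedDeriv (i : ℕ) (fun t : ℝ => t ^ (j : ℕ)) x).det
      = (Matrix.of fun i j : Fin (n + 1) => (x + (i : ℕ)) ^ (j : ℕ)).det := by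
  -- RHS is a Vandermonde determinant
  have hR : (Matrix.of fun i j : Fin (n + 1) => (x + (i : ℕ)) ^ (j : ℕ))
      = Matrix.vandermonde (fun i : Fin (n + 1) => ((i : ℕ) : ℝ) + x) := by
    ext i j
    simp [Matrix.vandermonde, add_comm]
  rw [hR, Matrix.det_vandermonde_add, Matrix.det_vandermonde_id_eq_superFactorial]
  -- LHS is upper triangular
  have hL : (Matrix.of fun i j : Fin (n + 1) =>
      iteratedDeriv (i : ℕ) (fun t : ℝ => t ^ (j : ℕ)) x).det
      = ∏ i : Fin (n + 1), ((i : ℕ).factorial : ℝ) := by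
    rw [Matrix.det_of_upperTriangular]
    · refine Finset.prod_congr rfl fun i _ => ?_
      rw [Matrix.of_apply, iteratedDeriv_pow_aux]
      simp [Nat.descFactorial_self]
    · intro i j hij
      rw [Matrix.of_apply, iteratedDeriv_pow_aux]
      simp only [Function.comp]
      have : (j : ℕ).descFactorial i = 0 :=
        Nat.descFactorial_eq_zero_iff_lt.mpr (Fin.lt_iff_val_lt_val.mp hij)
      simp [this]
  rw [hL]
  rw [Fin.prod_univ_eq_prod_range (fun i => ((i).factorial : ℝ)) (n + 1)]
  rw [← Nat.cast_prod]
  norm_cast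
  exact Nat.prod_range_succ_factorial n
end

section
/- For any family of polynomials p_0, ..., p_n of degree at most n forming a basis of the space of polynomials of degree ≤ n (equivalently, whose coefficient matrix A with respect to the monomial basis is invertible), the Wronskian determinant of p_0,...,p_n equals the Casoratian determinant of p_0,...,p_n, and both equal det(A) · ∏_{k=0}^{n} k!. -/
lemma itd_sum_pow (m : ℕ) (c : Fin m → ℝ) (k : ℕ) :
    iteratedDeriv k (fun x : ℝ => ∑ j : Fin m, c j * x ^ (j : ℕ))
      = fun x => ∑ j : Fin m, c j * (Nat.descFactorial (j : ℕ) k : ℝ) * x ^ ((j : ℕ) - k) := by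
  induction k with
  | zero => simp
  | succ k ih =>
    rw [iteratedDeriv_succ, ih]
    funext x
    rw [deriv_fun_sum (fun j _ => by fun_prop)]
    refine Finset.sum_congr rfl fun j _ => ?_
    rw [deriv_const_mul _ (by fun_prop), deriv_pow_field]
    rw [Nat.descFactorial_succ]
    push_cast
    ring_nf
    rw [Nat.sub_sub, Nat.add_comm 1 k]

theorem wronskian_eq_casoratian_poly_basis (n : ℕ)
    (A : Matrix (Fin (n + 1)) (Fin (n + 1)) ℝ) (hA : IsUnit A.det)
    (p : Fin (n + 1) → ℝ → ℝ)
    (hp : ∀ i x, p i x = ∑ j : Fin (n + 1), A i j * x ^ (j : ℕ)) (x : ℝ) :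
    (Matrix.of fun i j : Fin (n + 1) => iteratedDeriv (i : ℕ) (p j) x).det
        = (Matrix.of fun i j : Fin (n + 1) => p j (x + (i : ℕ))).det ∧
    (Matrix.of fun i j : Fin (n + 1) => iteratedDeriv (i : ℕ) (p j) x).det
        = A.det * ∏ k ∈ Finset.range (n + 1), (Nat.factorial k : ℝ) := by
  have hpf : ∀ j : Fin (n + 1), p j = fun y => ∑ k : Fin (n + 1), A j k * y ^ (k : ℕ) :=
    fun j => funext fun y => hp j y
  -- superfactorial value
  have hsf : (∏ k ∈ Finset.range (n + 1), (Nat.factorial k : ℝ)) = (Nat.superFactorial n : ℝ) := by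
    rw [← Nat.prod_range_succ_factorial n]
    push_cast
    rfl
  -- Wronskian part
  set W : Matrix (Fin (n + 1)) (Fin (n + 1)) ℝ :=
    Matrix.of fun i k : Fin (n + 1) =>
      (Nat.descFactorial (k : ℕ) (i : ℕ) : ℝ) * x ^ ((k : ℕ) - (i : ℕ)) with hW
  have hWfac : (Matrix.of fun i j : Fin (n + 1) => iteratedDeriv (i : ℕ) (p j) x)
      = W * A.transpose := by
    ext i j
    rw [Matrix.mul_apply]
    simp only [Matrix.of_apply, Matrix.transpose_apply, hpf j, itd_sum_pow, hW]
    exact Finset.sum_congr rfl fun k _ => by ring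
  have hWdet : W.det = (Nat.superFactorial n : ℝ) := by
    rw [Matrix.det_of_upperTriangular]
    · have : ∀ i : Fin (n + 1), W i i = (Nat.factorial (i : ℕ) : ℝ) := by
        intro i; simp [hW, Nat.descFactorial_self]
      rw [Finset.prod_congr rfl fun i _ => this i]
      rw [Fin.prod_univ_eq_prod_range (fun i => (Nat.factorial i : ℝ))]
      rw [hsf]
    · intro i j hij
      simp only [Function.id_def] at hij
      simp [hW, Nat.descFactorial_eq_zero_iff_lt.2 hij]
  -- Casoratian part
  set V : Matrix (Fin (n + 1)) (Fin (n + 1)) ℝ :=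
    Matrix.vandermonde (fun i : Fin (n + 1) => x + (i : ℕ)) with hV
  have hVfac : (Matrix.of fun i j : Fin (n + 1) => p j (x + (i : ℕ))) = V * A.transpose := by
    ext i j
    rw [Matrix.mul_apply]
    simp only [Matrix.of_apply, Matrix.transpose_apply, hp, hV, Matrix.vandermonde]
    exact Finset.sum_congr rfl fun k _ => by ring
  have hVdet : V.det = (Nat.superFactorial n : ℝ) := by
    have : V = Matrix.vandermonde (fun i : Fin (n + 1) => ((i : ℕ) : ℝ) + x) := by
      ext i j; simp [hV, Matrix.vandermonde, add_comm]
    rw [this, Matrix.det_vandermonde_add, Matrix.det_vandermonde_id_eq_superFactorial]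
  constructor
  · rw [hWfac, hVfac, Matrix.det_mul, Matrix.det_mul, hWdet, hVdet]
  · rw [hWfac, Matrix.det_mul, hWdet, Matrix.det_transpose, hsf]
    ring
end

section
/- For k ≤ n natural numbers, the alternating sum ∑_{r=0}^{n} (-1)^{n-r} r^k / (r! (n-r)!) equals 0 if k < n and equals 1 if k = n. -/
open Finset Function fwdDiff Nat

lemma fwdDiff_iter_pow_zero : ∀ n : ℕ, ∀ k ≤ n,
    (fwdDiff (1:ℕ))^[n] (fun x : ℕ ↦ (x : ℝ) ^ k) 0 = if k < n then 0 else (n ! : ℝ) := by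
  intro n
  induction n with
  | zero =>
    intro k hk
    interval_cases k
    simp
  | succ n IH =>
    intro k hk
    match k with
    | 0 =>
      have h0 : (fun x : ℕ ↦ (x : ℝ) ^ 0) = fun _ ↦ (1 : ℝ) := by funext x; simp
      rw [iterate_succ_apply, h0, fwdDiff_const]
      have hz : (fwdDiff (1:ℕ))^[n] (fun _ : ℕ ↦ (0 : ℝ)) 0 = 0 := by
        rw [fwdDiff_iter_eq_sum_shift]; simp
      rw [hz, if_pos (by omega)]
    | (j + 1) =>
      have hj : j ≤ n := by omega
      have h1 : fwdDiff (1:ℕ) (fun x : ℕ ↦ (x : ℝ) ^ (j + 1))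
          = ∑ i ∈ range (j + 1), ((j + 1).choose i : ℝ) • (fun x : ℕ ↦ (x : ℝ) ^ i) := by
        funext x
        simp only [fwdDiff, Finset.sum_apply, Pi.smul_apply, smul_eq_mul]
        push_cast
        rw [add_pow, Finset.sum_range_succ]
        simp [mul_comm]
      rw [iterate_succ_apply, h1, fwdDiff_iter_finset_sum, Finset.sum_apply]
      have h2 : ∀ i ∈ range (j + 1),
          ((fwdDiff (1:ℕ))^[n] (((j + 1).choose i : ℝ) • fun x : ℕ ↦ (x : ℝ) ^ i)) 0
            = ((j + 1).choose i : ℝ) * (if i < n then 0 else (n ! : ℝ)) := by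
        intro i hi
        rw [Finset.mem_range] at hi
        rw [fwdDiff_iter_const_smul, Pi.smul_apply, smul_eq_mul,
          IH i (le_trans (by omega : i ≤ j) hj)]
      rw [Finset.sum_congr rfl h2]
      rcases Nat.lt_or_ge (j + 1) (n + 1) with h | h
      · rw [if_pos h]
        apply Finset.sum_eq_zero
        intro i hi
        rw [Finset.mem_range] at hi
        rw [if_pos (by omega), mul_zero]
      · have hjn : j = n := by omega
        subst hjn
        rw [if_neg (by omega), Finset.sum_range_succ]
        have hz : ∑ i ∈ range j, ((j + 1).choose i : ℝ) * (if i < j then 0 else (j ! : ℝ)) = 0 :=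
          Finset.sum_eq_zero fun i hi => by
            rw [if_pos (Finset.mem_range.mp hi), mul_zero]
        rw [hz, zero_add, if_neg (lt_irrefl j)]
        push_cast [Nat.choose_succ_self_right, Nat.factorial_succ]
        ring

theorem stirling_alternating_sum (n k : ℕ) (hk : k ≤ n) :
    (∑ r ∈ Finset.range (n + 1),
        (-1 : ℝ) ^ (n - r) * (r : ℝ) ^ k / (Nat.factorial r * Nat.factorial (n - r)))
      = if k < n then 0 else 1 := by
  have key := fwdDiff_iter_pow_zero n k hk
  rw [fwdDiff_iter_eq_sum_shift] at key
  have hsum : ∑ r ∈ range (n + 1),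
      (((-1 : ℤ) ^ (n - r) * n.choose r) • (fun x : ℕ ↦ (x : ℝ) ^ k) (0 + r • 1))
      = ∑ r ∈ range (n + 1), (n ! : ℝ) *
        ((-1 : ℝ) ^ (n - r) * (r : ℝ) ^ k / (r ! * (n - r)!)) := by
    apply Finset.sum_congr rfl
    intro r hr
    simp only [Finset.mem_range] at hr
    have hrn : r ≤ n := by omega
    have hfac : (r ! : ℝ) * ((n - r)! : ℝ) ≠ 0 := by positivity
    have hchn : (n.choose r) * (r ! * (n - r)!) = n ! := by
      rw [← Nat.choose_mul_factorial_mul_factorial hrn, mul_assoc]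
    have hch : (n.choose r : ℝ) * ((r ! : ℝ) * ((n - r)! : ℝ)) = (n ! : ℝ) := by
      exact_mod_cast hchn
    simp only [zsmul_eq_mul, smul_eq_mul, mul_one, zero_add]
    push_cast
    field_simp
    linear_combination ((r : ℝ) ^ k) * hch
  rw [hsum, ← Finset.mul_sum] at key
  have hn : (n ! : ℝ) ≠ 0 := by positivity
  rcases Nat.lt_or_ge k n with h | h
  · rw [if_pos h] at key ⊢
    rcases mul_eq_zero.mp key with h0 | h0
    · exact absurd h0 hn
    · exact h0
  · rw [if_neg (by omega)] at key ⊢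
    exact mul_left_cancel₀ hn (key.trans (mul_one (n ! : ℝ)).symm)
end

section
/- Let y_1,...,y_n be (n-1)-times continuously differentiable functions on an open interval I and x ∈ I. Then lim_{h→0} C_n^h(x) / h^{n(n-1)/2} = W_n(x), where C_n^h(x) = det(y_j(x + (i-1)h))_{1≤i,j≤n} and W_n(x) = det(y_j^{(i-1)}(x))_{1≤i,j≤n}. -/
open Filter Set Finset fwdDiff

private lemma casowron_iteratedDerivWithin_eq {f : ℝ → ℝ} {s : Set ℝ} (hs : IsOpen s) (i : ℕ)
    {x : ℝ} (hx : x ∈ s) : iteratedDerivWithin i f s x = iteratedDeriv i f x := by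
  simp only [iteratedDerivWithin, iteratedDeriv, iteratedFDerivWithin_of_isOpen i hs hx]

private lemma casowron_fwdDiff_mvt {s : Set ℝ} (hs : IsOpen s) :
    ∀ (i : ℕ) (f : ℝ → ℝ), ContDiffOn ℝ i f s → ∀ c h : ℝ,
      Set.uIcc c (c + i * h) ⊆ s →
      ∃ ξ ∈ Set.uIcc c (c + i * h),
        (Δ_[h])^[i] f c = h ^ i * iteratedDeriv i f ξ := by
  intro i
  induction i with
  | zero =>
    intro f hf c h _
    exact ⟨c, Set.left_mem_uIcc, by simp [iteratedDeriv_zero]⟩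
  | succ i ih =>
    intro f hf c h hsub
    rcases eq_or_ne h 0 with rfl | hh
    · refine ⟨c, Set.left_mem_uIcc, ?_⟩
      have : (Δ_[(0:ℝ)])^[i+1] f c = 0 := by
        rw [Function.iterate_succ_apply']
        simp [fwdDiff]
      simp [this, pow_succ]
    · have hf1 : DifferentiableOn ℝ f s :=
        hf.differentiableOn (by simp)
      have hderiv : ContDiffOn ℝ i (deriv f) s :=
        hf.deriv_of_isOpen hs (by exact_mod_cast le_refl (i+1 : ℕ))
      have fact1 : ∀ u ∈ Set.uIcc c (c + h), ∀ k : ℕ, k ≤ i →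
          u + k * h ∈ Set.uIcc c (c + (i+1 : ℕ) * h) := by
        intro u hu k hk
        have hk' : (k : ℝ) ≤ i := by exact_mod_cast hk
        have hk0 : (0:ℝ) ≤ k := Nat.cast_nonneg k
        have hi0 : (0:ℝ) ≤ i := Nat.cast_nonneg i
        rw [Set.mem_uIcc] at hu ⊢
        push_cast
        rcases le_or_gt 0 h with h0 | h0
        · left; rcases hu with ⟨h1, h2⟩ | ⟨h1, h2⟩ <;> constructor <;> nlinarith
        · right; rcases hu with ⟨h1, h2⟩ | ⟨h1, h2⟩ <;> constructor <;> nlinarith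
      have hG : ∀ u ∈ Set.uIcc c (c + h),
          HasDerivAt ((Δ_[h])^[i] f) ((Δ_[h])^[i] (deriv f) u) u := by
        intro u hu
        have hmem : ∀ k ∈ range (i+1), u + k • h ∈ s := by
          intro k hk
          rw [Finset.mem_range, Nat.lt_succ_iff] at hk
          have := fact1 u hu k hk
          simpa [nsmul_eq_mul] using hsub this
        have : HasDerivAt (fun v => ∑ k ∈ range (i+1),
              ((-1 : ℤ) ^ (i - k) * i.choose k) • f (v + k • h))
            (∑ k ∈ range (i+1),
              ((-1 : ℤ) ^ (i - k) * i.choose k) • deriv f (u + k • h)) u := by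
          refine HasDerivAt.fun_sum fun k hk => ?_
          have hd : HasDerivAt f (deriv f (u + k • h)) (u + k • h) :=
            (hf1.differentiableAt (hs.mem_nhds (hmem k hk))).hasDerivAt
          have hcomp : HasDerivAt (fun v : ℝ => f (v + k • h)) (deriv f (u + k • h)) u := by
            simpa [Function.comp_def] using hd.comp u ((hasDerivAt_id u).add_const (k • h))
          simpa [zsmul_eq_mul] using hcomp.const_mul (((-1 : ℤ) ^ (i - k) * i.choose k : ℤ) : ℝ)
        have e1 : (fun v => ∑ k ∈ range (i+1),
              ((-1 : ℤ) ^ (i - k) * i.choose k) • f (v + k • h)) = (Δ_[h])^[i] f := by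
          ext v; exact (fwdDiff_iter_eq_sum_shift h f i v).symm
        rw [e1, ← fwdDiff_iter_eq_sum_shift h (deriv f) i u] at this
        exact this
      have key : ∃ c' ∈ Set.uIcc c (c + h),
          (Δ_[h])^[i] f (c + h) - (Δ_[h])^[i] f c = h * (Δ_[h])^[i] (deriv f) c' := by
        rcases lt_or_gt_of_ne hh with h0 | h0
        · have hab : c + h < c := by linarith
          obtain ⟨c', hc', hslope⟩ := exists_hasDerivAt_eq_slope ((Δ_[h])^[i] f)
            ((Δ_[h])^[i] (deriv f)) hab
            (fun u hu => (hG u (by rw [Set.uIcc_of_ge (by linarith : c + h ≤ c)]; exact hu)).continuousAt.continuousWithinAt)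
            (fun u hu => hG u (by rw [Set.uIcc_of_ge (by linarith : c + h ≤ c)]; exact Set.Ioo_subset_Icc_self hu))
          refine ⟨c', by rw [Set.uIcc_of_ge (by linarith : c + h ≤ c)]; exact Set.Ioo_subset_Icc_self hc', ?_⟩
          rw [eq_div_iff (by simp [sub_eq_iff_eq_add]; intro hq; exact hh (by linarith) : c - (c + h) ≠ 0)] at hslope
          linear_combination hslope
        · have hab : c < c + h := by linarith
          obtain ⟨c', hc', hslope⟩ := exists_hasDerivAt_eq_slope ((Δ_[h])^[i] f)
            ((Δ_[h])^[i] (deriv f)) hab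
            (fun u hu => (hG u (by rw [Set.uIcc_of_le (by linarith : c ≤ c + h)]; exact hu)).continuousAt.continuousWithinAt)
            (fun u hu => hG u (by rw [Set.uIcc_of_le (by linarith : c ≤ c + h)]; exact Set.Ioo_subset_Icc_self hu))
          refine ⟨c', by rw [Set.uIcc_of_le (by linarith : c ≤ c + h)]; exact Set.Ioo_subset_Icc_self hc', ?_⟩
          rw [eq_div_iff (by intro hq; exact hh (by linarith [sub_eq_zero.mp hq]) : c + h - c ≠ 0)] at hslope
          linear_combination -hslope
      obtain ⟨c', hc', hkey⟩ := key
      have hsub' : Set.uIcc c' (c' + i * h) ⊆ s := by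
        refine subset_trans (Set.uIcc_subset_uIcc ?_ ?_) hsub
        · simpa using fact1 c' hc' 0 (Nat.zero_le i)
        · exact fact1 c' hc' i le_rfl
      obtain ⟨ξ, hξ, hval⟩ := ih (deriv f) hderiv c' h hsub'
      refine ⟨ξ, ?_, ?_⟩
      · refine Set.uIcc_subset_uIcc ?_ ?_ hξ
        · simpa using fact1 c' hc' 0 (Nat.zero_le i)
        · exact fact1 c' hc' i le_rfl
      · have : (Δ_[h])^[i+1] f c = (Δ_[h])^[i] f (c + h) - (Δ_[h])^[i] f c := by
          rw [Function.iterate_succ_apply']; rfl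
        rw [this, hkey, hval, iteratedDeriv_succ']
        ring

private lemma casowron_fwdDiff_quot_tendsto {s : Set ℝ} (hs : IsOpen s) (i : ℕ) (f : ℝ → ℝ)
    (hf : ContDiffOn ℝ i f s) {x : ℝ} (hx : x ∈ s) :
    Filter.Tendsto (fun h : ℝ => (Δ_[h])^[i] f x / h ^ i) (nhdsWithin 0 {0}ᶜ)
      (nhds (iteratedDeriv i f x)) := by
  have hcont : ContinuousAt (iteratedDeriv i f) x := by
    have heq : Set.EqOn (iteratedDerivWithin i f s) (iteratedDeriv i f) s := fun z hz =>
      casowron_iteratedDerivWithin_eq hs i hz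
    have h1 : ContinuousOn (iteratedDerivWithin i f s) s :=
      hf.continuousOn_iteratedDerivWithin le_rfl hs.uniqueDiffOn
    exact (h1.congr heq.symm).continuousAt (hs.mem_nhds hx)
  rw [Metric.tendsto_nhdsWithin_nhds]
  intro ε hε
  obtain ⟨δ₁, hδ₁, hc⟩ := Metric.continuousAt_iff.mp hcont ε hε
  obtain ⟨ε', hε', hball⟩ := Metric.isOpen_iff.mp hs x hx
  have hipos : (0:ℝ) < (i:ℝ) + 1 := by positivity
  refine ⟨min (δ₁/((i:ℝ)+1)) (ε'/((i:ℝ)+1)), by positivity, ?_⟩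
  intro h hne hdist
  have hne' : h ≠ 0 := by simpa using hne
  rw [Real.dist_eq, sub_zero] at hdist
  have hb1 : |h| * ((i:ℝ)+1) < δ₁ := by
    rw [← lt_div_iff₀ hipos]; exact lt_of_lt_of_le hdist (min_le_left _ _)
  have hb2 : |h| * ((i:ℝ)+1) < ε' := by
    rw [← lt_div_iff₀ hipos]; exact lt_of_lt_of_le hdist (min_le_right _ _)
  have hi0 : (0:ℝ) ≤ (i:ℝ) := Nat.cast_nonneg i
  have habs : ∀ t ∈ Set.uIcc x (x + (i:ℝ) * h), |t - x| ≤ (i:ℝ) * |h| := by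
    intro t ht
    rw [Set.mem_uIcc] at ht
    rw [abs_le]
    have h1 : (i:ℝ) * h ≤ (i:ℝ) * |h| := by nlinarith [le_abs_self h]
    have h2 : -((i:ℝ) * |h|) ≤ (i:ℝ) * h := by nlinarith [neg_abs_le h]
    rcases ht with ⟨ha, hb⟩ | ⟨ha, hb⟩ <;> constructor <;> linarith
  have hsub : Set.uIcc x (x + (i:ℝ) * h) ⊆ s := by
    intro t ht
    apply hball
    rw [Metric.mem_ball, Real.dist_eq]
    have := habs t ht
    have habs0 : (0:ℝ) ≤ |h| := abs_nonneg h
    calc |t - x| ≤ (i:ℝ) * |h| := this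
      _ < ε' := by nlinarith
  obtain ⟨ξ, hξ, hval⟩ := casowron_fwdDiff_mvt hs i f hf x h hsub
  rw [hval, mul_comm, mul_div_assoc, div_self (pow_ne_zero i hne'), mul_one]
  apply hc
  rw [Real.dist_eq]
  calc |ξ - x| ≤ (i:ℝ) * |h| := habs ξ hξ
    _ < δ₁ := by nlinarith [abs_nonneg h]

theorem casoratian_tendsto_wronskian (n : ℕ) (y : Fin n → ℝ → ℝ) (I : Set ℝ)
    (hI : IsOpen I) (hy : ∀ j, ContDiffOn ℝ (n - 1) (y j) I) (x : ℝ) (hx : x ∈ I) :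
    Filter.Tendsto
      (fun h : ℝ =>
        (Matrix.of fun i j : Fin n => y j (x + (i : ℕ) * h)).det / h ^ (n * (n - 1) / 2))
      (nhdsWithin 0 {0}ᶜ)
      (nhds (Matrix.of fun i j : Fin n => iteratedDerivWithin (i : ℕ) (y j) I x).det) := by
  classical
  have hyi : ∀ (j : Fin n) (i : Fin n), ContDiffOn ℝ ((i : ℕ) : ℕ) (y j) I := by
    intro j i
    refine (hy j).of_le ?_
    obtain ⟨m, hm⟩ := Nat.exists_eq_add_of_lt i.isLt
    have h2 : ((n : ℕ) : WithTop ℕ∞) - 1 = (((i:ℕ) + m : ℕ) : WithTop ℕ∞) := by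
      have hcast : ((n : ℕ) : WithTop ℕ∞) = (((i:ℕ) + m + 1 : ℕ) : WithTop ℕ∞) := by
        exact_mod_cast congrArg (Nat.cast : ℕ → WithTop ℕ∞) hm
      rw [hcast]; norm_cast
    rw [h2]
    exact_mod_cast Nat.le_add_right (i:ℕ) m
  set B : Matrix (Fin n) (Fin n) ℝ := Matrix.of fun i m : Fin n =>
    if (m:ℕ) ≤ (i:ℕ) then (-1:ℝ)^((i:ℕ)-(m:ℕ)) * ((i:ℕ).choose m) else 0 with hB
  have hBdet : B.det = 1 := by
    have htri : ∀ i j : Fin n, i < j → B i j = 0 := by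
      intro i j hij
      have : ¬ ((j:ℕ) ≤ (i:ℕ)) := not_le.mpr hij
      simp only [hB, Matrix.of_apply, if_neg this]
    rw [Matrix.det_of_lowerTriangular B (fun i j hij => htri i j (by simpa using hij))]
    have hdiag : ∀ i : Fin n, B i i = 1 := by
      intro i; simp [hB]
    simp [hdiag]
  have hBM : ∀ h : ℝ, ∀ i j : Fin n,
      (B * (Matrix.of fun i j : Fin n => y j (x + (i : ℕ) * h))) i j
        = (Δ_[h])^[(i:ℕ)] (y j) x := by
    intro h i j
    rw [Matrix.mul_apply, fwdDiff_iter_eq_sum_shift]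
    have e1 : ∀ m : Fin n,
        B i m * (Matrix.of fun i j : Fin n => y j (x + (i : ℕ) * h)) m j
        = (fun m : ℕ => (if m ≤ (i:ℕ) then (-1:ℝ)^((i:ℕ)-m) * ((i:ℕ).choose m) else 0)
            * y j (x + m * h)) (m : ℕ) := fun m => rfl
    rw [Finset.sum_congr rfl (fun m _ => e1 m),
      Fin.sum_univ_eq_sum_range (fun m : ℕ =>
        (if m ≤ (i:ℕ) then (-1:ℝ)^((i:ℕ)-m) * ((i:ℕ).choose m) else 0) * y j (x + m * h)) n]
    rw [← Finset.sum_subset (Finset.range_subset_range.mpr i.isLt)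
      (fun m _ hm => by
        rw [Finset.mem_range, Nat.lt_succ_iff, not_le] at hm
        simp [Nat.not_le.mpr hm, hm.not_ge])]
    refine Finset.sum_congr rfl fun m hm => ?_
    rw [Finset.mem_range, Nat.lt_succ_iff] at hm
    rw [if_pos hm, zsmul_eq_mul, nsmul_eq_mul]
    push_cast
    ring
  have hfact : ∀ h : ℝ, h ≠ 0 →
      (Matrix.of fun i j : Fin n => y j (x + (i : ℕ) * h)).det / h ^ (n * (n - 1) / 2)
        = (Matrix.of fun i j : Fin n => (Δ_[h])^[(i:ℕ)] (y j) x / h^(i:ℕ)).det := by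
    intro h hh
    have h1 : (Matrix.of fun i j : Fin n => y j (x + (i : ℕ) * h)).det
        = (Matrix.of fun i j : Fin n => (Δ_[h])^[(i:ℕ)] (y j) x).det := by
      rw [show (Matrix.of fun i j : Fin n => (Δ_[h])^[(i:ℕ)] (y j) x)
          = B * (Matrix.of fun i j : Fin n => y j (x + (i : ℕ) * h)) by
        ext i j; exact (hBM h i j).symm]
      rw [Matrix.det_mul, hBdet, one_mul]
    have h2 : (Matrix.of fun i j : Fin n => (Δ_[h])^[(i:ℕ)] (y j) x)
        = Matrix.of (fun i j : Fin n =>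
            h^(i:ℕ) * ((Δ_[h])^[(i:ℕ)] (y j) x / h^(i:ℕ))) := by
      ext i j
      simp only [Matrix.of_apply]
      rw [mul_div_cancel₀ _ (pow_ne_zero _ hh)]
    have h3 : ∏ i : Fin n, h ^ (i:ℕ) = h ^ (n * (n-1)/2) := by
      rw [Finset.prod_pow_eq_pow_sum]
      congr 1
      rw [Fin.sum_univ_eq_sum_range (fun m => m) n]
      exact Finset.sum_range_id n
    have hdmc := Matrix.det_mul_column (fun i : Fin n => h ^ (i:ℕ))
      (Matrix.of fun i j : Fin n => (Δ_[h])^[(i:ℕ)] (y j) x / h^(i:ℕ))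
    simp only [Matrix.of_apply] at hdmc
    rw [h1, h2, hdmc, h3, mul_comm,
      mul_div_assoc, div_self (pow_ne_zero _ hh), mul_one]
  have hNW : Filter.Tendsto
      (fun h : ℝ => (Matrix.of fun i j : Fin n => (Δ_[h])^[(i:ℕ)] (y j) x / h^(i:ℕ)))
      (nhdsWithin 0 {0}ᶜ)
      (nhds (Matrix.of fun i j : Fin n => iteratedDeriv (i:ℕ) (y j) x)) := by
    refine tendsto_pi_nhds.mpr fun i => tendsto_pi_nhds.mpr fun j => ?_
    exact casowron_fwdDiff_quot_tendsto hI (i:ℕ) (y j) (hyi j i) hx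
  have hdet : Filter.Tendsto
      (fun h : ℝ => (Matrix.of fun i j : Fin n => (Δ_[h])^[(i:ℕ)] (y j) x / h^(i:ℕ)).det)
      (nhdsWithin 0 {0}ᶜ)
      (nhds (Matrix.of fun i j : Fin n => iteratedDeriv (i:ℕ) (y j) x).det) := by
    exact ((Continuous.matrix_det (continuous_id)).tendsto _).comp hNW
  have hcenter : (Matrix.of fun i j : Fin n => iteratedDerivWithin (i : ℕ) (y j) I x).det
      = (Matrix.of fun i j : Fin n => iteratedDeriv (i:ℕ) (y j) x).det := by
    congr 1
    ext i j
    simp only [Matrix.of_apply]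
    exact casowron_iteratedDerivWithin_eq hI (i:ℕ) hx
  rw [hcenter]
  refine hdet.congr' ?_
  exact Filter.eventuallyEq_of_mem self_mem_nhdsWithin
    (fun h hh => (hfact h (by simpa using hh)).symm)
end

section
/- Let y_1,...,y_n be n-times continuously differentiable functions on an open interval I with Wronskian W_n(x) > 0 at some point x. Then for all sufficiently small h > 0, the step-h Casoratian C_n^h(x) = det(y_j(x+(i-1)h)) is positive. -/
open Filter Set Finset


lemma alt_sum_aux (i : ℕ) : ∀ m : ℕ, m ≤ i →
    ∑ k ∈ Finset.range (i+1), (-1:ℝ)^k * (i.choose k) * (k:ℝ)^m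
      = if m = i then (-1:ℝ)^i * i.factorial else 0 := by
  induction i with
  | zero =>
    intro m hm
    interval_cases m
    simp
  | succ i IH =>
    intro m hm
    set g : ℕ → ℝ := fun l => ∑ k ∈ Finset.range (i+1), (-1:ℝ)^k * (i.choose k) * (k:ℝ)^l with hg
    set G : ℕ → ℝ := fun j => (-1:ℝ)^j * (i.choose j) * (j:ℝ)^m with hG
    have step1 : ∑ k ∈ Finset.range (i+2), (-1:ℝ)^k * ((i+1).choose k) * (k:ℝ)^m
        = (∑ k ∈ Finset.range (i+1),
            (-((-1:ℝ)^k * (i.choose k) * ((k:ℝ)+1)^m) - (-1:ℝ)^k * (i.choose (k+1)) * ((k:ℝ)+1)^m))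
          + (0:ℝ)^m := by
      rw [Finset.sum_range_succ']
      have h0 : (-1:ℝ)^0 * (((i+1).choose 0 : ℕ):ℝ) * ((0:ℕ):ℝ)^m = (0:ℝ)^m := by simp
      rw [h0]
      congr 1
      refine Finset.sum_congr rfl fun k _ => ?_
      rw [Nat.choose_succ_succ]
      push_cast
      ring
    have step2 : ∑ k ∈ Finset.range (i+1), (-1:ℝ)^k * (i.choose (k+1)) * ((k:ℝ)+1)^m
        = (0:ℝ)^m - g m := by
      have e1 : ∀ k, (-1:ℝ)^k * (i.choose (k+1)) * ((k:ℝ)+1)^m = -G (k+1) := by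
        intro k; rw [hG]; push_cast; ring
      have e2 : ∑ k ∈ Finset.range (i+2), G k
          = ∑ k ∈ Finset.range (i+1), G (k+1) + G 0 := Finset.sum_range_succ' G (i+1)
      have e3 : ∑ k ∈ Finset.range (i+2), G k = g m + G (i+1) := by
        rw [Finset.sum_range_succ]
      have e4 : G (i+1) = 0 := by
        simp [hG, Nat.choose_succ_self]
      have e5 : G 0 = (0:ℝ)^m := by simp [hG]
      calc ∑ k ∈ Finset.range (i+1), (-1:ℝ)^k * (i.choose (k+1)) * ((k:ℝ)+1)^m
          = ∑ k ∈ Finset.range (i+1), -G (k+1) := by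
            exact Finset.sum_congr rfl fun k _ => e1 k
        _ = -(∑ k ∈ Finset.range (i+1), G (k+1)) := by rw [Finset.sum_neg_distrib]
        _ = -(g m + G (i+1) - G 0) := by rw [← e3]; rw [e2]; ring
        _ = (0:ℝ)^m - g m := by rw [e4, e5]; ring
    have step3 : ∑ k ∈ Finset.range (i+1), (-1:ℝ)^k * (i.choose k) * ((k:ℝ)+1)^m
        = ∑ l ∈ Finset.range (m+1), (m.choose l : ℝ) * g l := by
      have binom : ∀ k : ℕ, ((k:ℝ)+1)^m = ∑ l ∈ Finset.range (m+1), (k:ℝ)^l * (m.choose l : ℝ) := by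
        intro k
        simpa using add_pow (k:ℝ) 1 m
      calc ∑ k ∈ Finset.range (i+1), (-1:ℝ)^k * (i.choose k) * ((k:ℝ)+1)^m
          = ∑ k ∈ Finset.range (i+1), ∑ l ∈ Finset.range (m+1),
              (m.choose l : ℝ) * ((-1:ℝ)^k * (i.choose k) * (k:ℝ)^l) := by
            refine Finset.sum_congr rfl fun k _ => ?_
            rw [binom k, Finset.mul_sum]
            exact Finset.sum_congr rfl fun l _ => by ring
        _ = ∑ l ∈ Finset.range (m+1), (m.choose l : ℝ) * g l := by
            rw [Finset.sum_comm]
            exact Finset.sum_congr rfl fun l _ => by rw [← Finset.mul_sum]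
    have main : ∑ k ∈ Finset.range (i+2), (-1:ℝ)^k * ((i+1).choose k) * (k:ℝ)^m
        = -∑ l ∈ Finset.range m, (m.choose l : ℝ) * g l := by
      rw [step1, Finset.sum_sub_distrib, step2, Finset.sum_neg_distrib, step3, Finset.sum_range_succ]
      simp only [Nat.choose_self, Nat.cast_one, one_mul]
      ring
    rw [main]
    have eval : ∑ l ∈ Finset.range m, (m.choose l : ℝ) * g l
        = if i ∈ Finset.range m then (m.choose i : ℝ) * ((-1:ℝ)^i * i.factorial) else 0 := by
      rw [← Finset.sum_ite_eq' (Finset.range m) i (fun l => (m.choose l : ℝ) * ((-1:ℝ)^i * i.factorial))]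
      refine Finset.sum_congr rfl fun l hl => ?_
      have hli : l ≤ i := by
        have := Finset.mem_range.mp hl
        omega
      have hgl : g l = if l = i then (-1:ℝ)^i * i.factorial else 0 := IH l hli
      rw [hgl]
      by_cases h : l = i <;> simp [h]
    rw [eval]
    by_cases hmi : m = i + 1
    · subst hmi
      rw [if_pos (Finset.mem_range.mpr (Nat.lt_succ_self i)), if_pos rfl,
        Nat.choose_succ_self_right, Nat.factorial_succ]
      push_cast
      ring
    · have : ¬ (i ∈ Finset.range m) := by
        simp only [Finset.mem_range]
        omega
      rw [if_neg this, if_neg hmi, neg_zero]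

lemma alt_sum (i m : ℕ) (hm : m ≤ i) :
    ∑ k ∈ Finset.range (i+1), (-1:ℝ)^(i+k) * (i.choose k) * (k:ℝ)^m
      = if m = i then (i.factorial : ℝ) else 0 := by
  have h := alt_sum_aux i m hm
  have : ∑ k ∈ Finset.range (i+1), (-1:ℝ)^(i+k) * (i.choose k) * (k:ℝ)^m
      = (-1:ℝ)^i * ∑ k ∈ Finset.range (i+1), (-1:ℝ)^k * (i.choose k) * (k:ℝ)^m := by
    rw [Finset.mul_sum]
    exact Finset.sum_congr rfl fun k _ => by rw [pow_add]; ring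
  rw [this, h]
  by_cases hmi : m = i
  · rw [if_pos hmi, if_pos hmi, ← mul_assoc, ← pow_add]
    rw [Even.neg_one_pow ⟨i, rfl⟩, one_mul]
  · rw [if_neg hmi, if_neg hmi, mul_zero]


lemma iterEqOn_open {f : ℝ → ℝ} {I : Set ℝ} (hI : IsOpen I) (m : ℕ) :
    Set.EqOn (iteratedDerivWithin m f I) (iteratedDeriv m f) I := by
  intro z hz
  unfold iteratedDerivWithin iteratedDeriv
  rw [iteratedFDerivWithin_of_isOpen m hI hz]

lemma iterEqOn_subset {f : ℝ → ℝ} {I s : Set ℝ} (hI : IsOpen I) {n : ℕ}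
    (hf : ContDiffOn ℝ n f I) (hs : UniqueDiffOn ℝ s) (hsub : s ⊆ I) :
    ∀ m : ℕ, m ≤ n → Set.EqOn (iteratedDerivWithin m f s) (iteratedDeriv m f) s := by
  intro m
  induction m with
  | zero => intro _ z hz; simp
  | succ m IH =>
    intro hm z hz
    have hm' : m ≤ n := Nat.le_of_succ_le hm
    have hmn : m < n := hm
    rw [iteratedDerivWithin_succ, derivWithin_congr (IH hm') (IH hm' hz)]
    have h1 : DifferentiableWithinAt ℝ (iteratedDerivWithin m f I) I z :=
      (hf.differentiableOn_iteratedDerivWithin (by exact_mod_cast hmn) hI.uniqueDiffOn) z (hsub hz)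
    have h2 : DifferentiableAt ℝ (iteratedDerivWithin m f I) z :=
      h1.differentiableAt (hI.mem_nhds (hsub hz))
    have h3 : iteratedDerivWithin m f I =ᶠ[nhds z] iteratedDeriv m f :=
      Filter.eventuallyEq_of_mem (hI.mem_nhds (hsub hz)) (iterEqOn_open hI m)
    have h4 : DifferentiableAt ℝ (iteratedDeriv m f) z := h3.differentiableAt_iff.mp h2
    rw [h4.derivWithin (hs z hz), iteratedDeriv_succ]

lemma tendsto_diffquot {f : ℝ → ℝ} {I : Set ℝ} (hI : IsOpen I) {n : ℕ}
    (hf : ContDiffOn ℝ n f I) {x : ℝ} (hx : x ∈ I) {i : ℕ} (hi : i < n) :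
    Filter.Tendsto
      (fun h : ℝ => (∑ k ∈ Finset.range (i+1), (-1:ℝ)^(i+k) * (i.choose k) * f (x + k*h)) / h^i)
      (nhdsWithin 0 (Set.Ioi (0:ℝ))) (nhds (iteratedDerivWithin i f I x)) := by
  obtain ⟨ε, hε, hball⟩ := Metric.isOpen_iff.mp hI x hx
  set b := ε/2 with hbdef
  have hb : 0 < b := by positivity
  have hxb : x < x + b := by linarith
  have hsub : Set.Icc x (x+b) ⊆ I := by
    intro t ht
    apply hball
    rw [Metric.mem_ball, Real.dist_eq, abs_sub_lt_iff]
    constructor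
    · linarith [ht.1, ht.2]
    · linarith [ht.1]
  set s := Set.Icc x (x+b) with hsdef
  have hs : UniqueDiffOn ℝ s := uniqueDiffOn_Icc hxb
  have hfs : ContDiffOn ℝ (↑(i+1)) f s := (hf.mono hsub).of_le (by exact_mod_cast hi)
  obtain ⟨C, hC⟩ := exists_taylor_mean_remainder_bound (le_of_lt hxb) hfs
  set d : ℕ → ℝ := fun m => iteratedDerivWithin m f s x with hddef
  have hxs : x ∈ s := Set.left_mem_Icc.mpr hxb.le
  have hdi : iteratedDerivWithin i f I x = d i := by
    rw [hddef]
    have h1 := iterEqOn_subset hI hf hs hsub i (le_of_lt hi) hxs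
    have h2 := iterEqOn_open (f := f) hI i hx
    simp only at h1 h2 ⊢
    rw [h1, h2]
  -- algebraic identity for the Taylor polynomial part
  have claim : ∀ h : ℝ, ∑ k ∈ Finset.range (i+1),
      (-1:ℝ)^(i+k) * (i.choose k) * taylorWithinEval f i s x (x + k*h) = h^i * d i := by
    intro h
    have expand : ∀ k : ℕ, taylorWithinEval f i s x (x + k*h)
        = ∑ m ∈ Finset.range (i+1), ((k:ℝ)^m * h^m / m.factorial) * d m := by
      intro k
      rw [taylor_within_apply]
      refine Finset.sum_congr rfl fun m hm => ?_
      rw [smul_eq_mul, add_sub_cancel_left, mul_pow]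
      simp only [hddef]
      ring
    calc ∑ k ∈ Finset.range (i+1), (-1:ℝ)^(i+k) * (i.choose k) * taylorWithinEval f i s x (x + k*h)
        = ∑ k ∈ Finset.range (i+1), ∑ m ∈ Finset.range (i+1),
            ((-1:ℝ)^(i+k) * (i.choose k) * (k:ℝ)^m) * (h^m / m.factorial * d m) := by
          refine Finset.sum_congr rfl fun k _ => ?_
          rw [expand k, Finset.mul_sum]
          exact Finset.sum_congr rfl fun m _ => by ring
      _ = ∑ m ∈ Finset.range (i+1),
            (∑ k ∈ Finset.range (i+1), (-1:ℝ)^(i+k) * (i.choose k) * (k:ℝ)^m)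
              * (h^m / m.factorial * d m) := by
          rw [Finset.sum_comm]
          exact Finset.sum_congr rfl fun m _ => by rw [Finset.sum_mul]
      _ = ∑ m ∈ Finset.range (i+1),
            (if m = i then (i.factorial : ℝ) else 0) * (h^m / m.factorial * d m) := by
          refine Finset.sum_congr rfl fun m hm => ?_
          rw [alt_sum i m (Nat.lt_succ_iff.mp (Finset.mem_range.mp hm))]
      _ = h^i * d i := by
          simp only [ite_mul, zero_mul]
          rw [Finset.sum_ite_eq' (Finset.range (i+1)) i
            (fun m => (i.factorial : ℝ) * (h^m / m.factorial * d m))]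
          rw [if_pos (Finset.mem_range.mpr (Nat.lt_succ_self i))]
          have : (i.factorial : ℝ) ≠ 0 := Nat.cast_ne_zero.mpr i.factorial_ne_zero
          field_simp
  -- the error term
  set E : ℝ → ℝ := fun h => (∑ k ∈ Finset.range (i+1),
    (-1:ℝ)^(i+k) * (i.choose k) * (f (x + k*h) - taylorWithinEval f i s x (x + k*h))) / h^i
    with hEdef
  have heq : ∀ h : ℝ, 0 < h →
      (∑ k ∈ Finset.range (i+1), (-1:ℝ)^(i+k) * (i.choose k) * f (x + k*h)) / h^i = d i + E h := by
    intro h hh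
    have hne : (h:ℝ)^i ≠ 0 := pow_ne_zero _ hh.ne'
    rw [hEdef]
    simp only
    have split : (∑ k ∈ Finset.range (i+1), (-1:ℝ)^(i+k) * (i.choose k) * f (x + k*h))
        = h^i * d i + ∑ k ∈ Finset.range (i+1),
            (-1:ℝ)^(i+k) * (i.choose k) * (f (x + k*h) - taylorWithinEval f i s x (x + k*h)) := by
      rw [← claim h, ← Finset.sum_add_distrib]
      exact Finset.sum_congr rfl fun k _ => by ring
    rw [split, add_div, mul_div_cancel_left₀ _ hne]
  set δ := b / ((i:ℝ)+1) with hδdef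
  have hδ : 0 < δ := by positivity
  set K := (∑ k ∈ Finset.range (i+1), |(-1:ℝ)^(i+k) * (i.choose k)|)
      * (max C 0 * ((i:ℝ)+1)^(i+1)) with hK
  have hEbound : ∀ h ∈ Set.Ioo (0:ℝ) δ, |E h| ≤ K * h := by
    intro h hh
    obtain ⟨hh0, hhδ⟩ := hh
    have hne : h^i ≠ 0 := pow_ne_zero _ hh0.ne'
    have hterm : ∀ k ∈ Finset.range (i+1),
        |(-1:ℝ)^(i+k) * (i.choose k) * (f (x + k*h) - taylorWithinEval f i s x (x + k*h))|
          ≤ |(-1:ℝ)^(i+k) * (i.choose k)| * (max C 0 * ((i:ℝ)+1)^(i+1) * h^(i+1)) := by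
      intro k hk
      rw [abs_mul]
      refine mul_le_mul_of_nonneg_left ?_ (abs_nonneg _)
      have hkle : (k:ℝ) ≤ (i:ℝ)+1 := by
        have hk' : k ≤ i := Nat.lt_succ_iff.mp (Finset.mem_range.mp hk)
        have : (k:ℝ) ≤ (i:ℝ) := Nat.cast_le.mpr hk'
        linarith
      have hkh : (0:ℝ) ≤ (k:ℝ)*h := mul_nonneg (Nat.cast_nonneg k) hh0.le
      have hib : ((i:ℝ)+1)*h < b := by
        rw [hδdef, lt_div_iff₀ (by positivity)] at hhδ
        nlinarith
      have hmem : x + (k:ℝ)*h ∈ Set.Icc x (x+b) := by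
        constructor
        · linarith
        · nlinarith [mul_le_mul_of_nonneg_right hkle hh0.le]
      have hCk := hC (x + (k:ℝ)*h) hmem
      rw [Real.norm_eq_abs, add_sub_cancel_left] at hCk
      calc |f (x + (k:ℝ)*h) - taylorWithinEval f i s x (x + (k:ℝ)*h)|
          ≤ C * ((k:ℝ)*h)^(i+1) := hCk
        _ ≤ max C 0 * (((i:ℝ)+1)*h)^(i+1) := by
            refine mul_le_mul (le_max_left C 0) ?_ (pow_nonneg hkh _) (le_max_right C 0)
            exact pow_le_pow_left₀ hkh (mul_le_mul_of_nonneg_right hkle hh0.le) _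
        _ = max C 0 * ((i:ℝ)+1)^(i+1) * h^(i+1) := by rw [mul_pow]; ring
    rw [hEdef]
    simp only
    rw [abs_div, abs_pow, abs_of_pos hh0]
    rw [div_le_iff₀ (by positivity)]
    calc |∑ k ∈ Finset.range (i+1),
        (-1:ℝ)^(i+k) * (i.choose k) * (f (x + k*h) - taylorWithinEval f i s x (x + k*h))|
        ≤ ∑ k ∈ Finset.range (i+1),
            |(-1:ℝ)^(i+k) * (i.choose k) * (f (x + k*h) - taylorWithinEval f i s x (x + k*h))| :=
          Finset.abs_sum_le_sum_abs _ _
      _ ≤ ∑ k ∈ Finset.range (i+1),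
            |(-1:ℝ)^(i+k) * (i.choose k)| * (max C 0 * ((i:ℝ)+1)^(i+1) * h^(i+1)) :=
          Finset.sum_le_sum hterm
      _ = K * h * h^i := by
          rw [← Finset.sum_mul, hK, pow_succ]
          ring
  have hKt : Tendsto (fun h : ℝ => K * h) (nhdsWithin 0 (Set.Ioi (0:ℝ))) (nhds 0) := by
    have h1 : Tendsto (fun h : ℝ => K * h) (nhds (0:ℝ)) (nhds (K * 0)) :=
      (continuous_const.mul continuous_id).tendsto 0
    rw [mul_zero] at h1
    exact h1.mono_left nhdsWithin_le_nhds
  have hEtendsto : Tendsto E (nhdsWithin 0 (Set.Ioi (0:ℝ))) (nhds 0) := by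
    refine squeeze_zero_norm' ?_ hKt
    filter_upwards [Ioo_mem_nhdsGT hδ] with h hh
    simpa [Real.norm_eq_abs] using hEbound h hh
  have hfinal : Tendsto (fun h => d i + E h) (nhdsWithin 0 (Set.Ioi (0:ℝ))) (nhds (d i + 0)) :=
    tendsto_const_nhds.add hEtendsto
  rw [add_zero] at hfinal
  rw [hdi]
  refine hfinal.congr' ?_
  filter_upwards [self_mem_nhdsWithin] with h hh
  exact (heq h hh).symm


theorem casoratian_pos_of_wronskian_pos (n : ℕ) (y : Fin n → ℝ → ℝ) (I : Set ℝ)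
    (hI : IsOpen I) (hy : ∀ j, ContDiffOn ℝ n (y j) I) (x : ℝ) (hx : x ∈ I)
    (hW : 0 < (Matrix.of fun i j : Fin n => iteratedDerivWithin (i : ℕ) (y j) I x).det) :
    ∀ᶠ h in nhdsWithin 0 (Set.Ioi (0 : ℝ)),
      0 < (Matrix.of fun i j : Fin n => y j (x + (i : ℕ) * h)).det := by
  classical
  set M : ℝ → Matrix (Fin n) (Fin n) ℝ := fun h => Matrix.of fun i j : Fin n =>
    (∑ k ∈ Finset.range ((i:ℕ)+1), (-1:ℝ)^((i:ℕ)+k) * ((i:ℕ).choose k) * y j (x + k*h)) / h^(i:ℕ)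
    with hMdef
  have hMtendsto : Filter.Tendsto M (nhdsWithin 0 (Set.Ioi (0:ℝ)))
      (nhds (Matrix.of fun i j : Fin n => iteratedDerivWithin (i : ℕ) (y j) I x)) := by
    refine tendsto_pi_nhds.mpr ?_
    intro i
    rw [tendsto_pi_nhds]
    intro j
    exact tendsto_diffquot hI (hy j) hx i.isLt
  have hdet : Filter.Tendsto (fun h => (M h).det) (nhdsWithin 0 (Set.Ioi (0:ℝ)))
      (nhds (Matrix.of fun i j : Fin n => iteratedDerivWithin (i : ℕ) (y j) I x).det) :=
    ((Continuous.matrix_det continuous_id).tendsto _).comp hMtendsto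
  have hev : ∀ᶠ h in nhdsWithin 0 (Set.Ioi (0:ℝ)), 0 < (M h).det :=
    hdet.eventually (eventually_gt_nhds hW)
  filter_upwards [hev, self_mem_nhdsWithin] with h hMh hh
  have hh0 : (0:ℝ) < h := hh
  -- the triangular matrix of binomial coefficients
  set T : Matrix (Fin n) (Fin n) ℝ :=
    Matrix.of fun i k : Fin n => (-1:ℝ)^((i:ℕ)+(k:ℕ)) * ((i:ℕ).choose (k:ℕ)) with hTdef
  have hTtri : T.BlockTriangular OrderDual.toDual := by
    intro i j hij
    have : (i:ℕ) < (j:ℕ) := hij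
    simp [hTdef, Nat.choose_eq_zero_of_lt this]
  have hTdet : T.det = 1 := by
    rw [Matrix.det_of_lowerTriangular T hTtri]
    have : ∀ i : Fin n, T i i = 1 := by
      intro i
      simp only [hTdef, Matrix.of_apply, Nat.choose_self, Nat.cast_one, mul_one]
      exact Even.neg_one_pow ⟨(i:ℕ), rfl⟩
    rw [Finset.prod_congr rfl (fun i _ => this i)]
    simp
  have hTC : T * (Matrix.of fun i j : Fin n => y j (x + (i:ℕ) * h))
      = Matrix.of (fun i j : Fin n => h^(i:ℕ) * M h i j) := by
    ext i j
    rw [Matrix.mul_apply]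
    simp only [Matrix.of_apply, hMdef, hTdef]
    rw [mul_div_cancel₀ _ (pow_ne_zero _ hh0.ne')]
    rw [Fin.sum_univ_eq_sum_range
      (fun k => (-1:ℝ)^((i:ℕ)+k) * ((i:ℕ).choose k) * y j (x + k*h)) n]
    refine (Finset.sum_subset (Finset.range_subset_range.mpr i.isLt) ?_).symm
    intro k hk hk'
    have : (i:ℕ) < k := by
      simp only [Finset.mem_range] at hk hk'
      omega
    simp [Nat.choose_eq_zero_of_lt this]
  have key : (Matrix.of fun i j : Fin n => y j (x + (i:ℕ) * h)).det
      = (∏ i : Fin n, h^(i:ℕ)) * (M h).det := by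
    have h1 : T.det * (Matrix.of fun i j : Fin n => y j (x + (i:ℕ) * h)).det
        = (∏ i : Fin n, h^(i:ℕ)) * (M h).det := by
      rw [← Matrix.det_mul, hTC]
      exact Matrix.det_mul_column (fun i : Fin n => h^(i:ℕ)) (M h)
    rwa [hTdet, one_mul] at h1
  rw [key]
  have hprod : 0 < ∏ i : Fin n, h^(i:ℕ) := Finset.prod_pos fun i _ => pow_pos hh0 _
  exact mul_pos hprod hMh
end

section
/- For m ≥ 1, λ < 0, and arbitrary 1-antiperiodic functions μ_1,...,μ_m : ℝ → ℝ, the function y(x) = (μ_1(x) + μ_2(x)x + ... + μ_m(x)x^{m-1}) |λ|^x satisfies (E - λI)^m y = 0. -/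
/-! Since `E` flips the sign of a `1`-antiperiodic `ν` and multiplies `|λ| ^ x` by `|λ| = -λ`,
`E - λ` acts on `ν(x) r(x) |λ|^x` as `λ Δ` acts on `r`, where `Δ` is the forward difference.
Hence `(E - λ)^m` acts as `λ^m Δ^m`, which kills the monomials `x ^ i` with `i < m`. -/

/-- The operator `y ↦ E y - λ y`, where `(E y)(x) = y (x + 1)` is the shift operator. -/
def shiftMinusLam (lam : ℝ) (y : ℝ → ℝ) : ℝ → ℝ := fun x => y (x + 1) - lam * y x

open Function fwdDiff

def shiftMinusLamₗ (lam : ℝ) : Module.End ℝ (ℝ → ℝ) where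
  toFun := shiftMinusLam lam
  map_add' f g := by funext x; simp only [shiftMinusLam, Pi.add_apply]; ring
  map_smul' c f := by
    funext x
    simp only [shiftMinusLam, Pi.smul_apply, smul_eq_mul, RingHom.id_apply]
    ring

lemma coe_shiftMinusLamₗ_pow (lam : ℝ) (n : ℕ) :
    ⇑(shiftMinusLamₗ lam ^ n) = (shiftMinusLam lam)^[n] :=
  Module.End.coe_pow _ n

section Antiperiodic

variable {lam : ℝ} {ν : ℝ → ℝ}

lemma shiftMinusLam_antiperiodic_mul (hlam : lam < 0) (hν : Antiperiodic ν 1) (r : ℝ → ℝ) :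
    shiftMinusLam lam (fun x => ν x * r x * |lam| ^ x) =
      fun x => ν x * (lam • Δ_[1] r) x * |lam| ^ x := by
  funext x
  have habs : |lam| = -lam := abs_of_neg hlam
  rw [shiftMinusLam, hν x, Real.rpow_add_one (abs_pos.mpr hlam.ne).ne', habs]
  simp only [Pi.smul_apply, fwdDiff, smul_eq_mul]
  ring

lemma iterate_shiftMinusLam_antiperiodic_mul (hlam : lam < 0) (hν : Antiperiodic ν 1)
    (r : ℝ → ℝ) (n : ℕ) :
    (shiftMinusLam lam)^[n] (fun x => ν x * r x * |lam| ^ x) =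
      fun x => ν x * (lam ^ n • (Δ_[1])^[n] r) x * |lam| ^ x := by
  induction n with
  | zero => simp
  | succ n ih =>
    rw [iterate_succ_apply', ih, shiftMinusLam_antiperiodic_mul hlam hν, fwdDiff_const_smul,
      smul_smul, ← pow_succ', ← iterate_succ_apply' (Δ_[1])]

end Antiperiodic

theorem solution_of_shift_operator_power_neg_general (m : ℕ) (lam : ℝ)
    (hlam : lam < 0) (μ : Fin m → ℝ → ℝ) (hμ : ∀ i x, μ i (x + 1) = -μ i x)
    (y : ℝ → ℝ)
    (hy : ∀ x, y x = (∑ i : Fin m, μ i x * x ^ (i : ℕ)) * |lam| ^ x) :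
    (shiftMinusLam lam)^[m] y = fun _ => 0 := by
  have hy_sum : y = ∑ i : Fin m, fun x => μ i x * x ^ (i : ℕ) * |lam| ^ x := by
    funext x
    rw [hy x, Finset.sum_apply, Finset.sum_mul]
  rw [hy_sum, ← coe_shiftMinusLamₗ_pow, map_sum]
  refine Finset.sum_eq_zero fun i _ => ?_
  rw [coe_shiftMinusLamₗ_pow, iterate_shiftMinusLam_antiperiodic_mul hlam (hμ i),
    fwdDiff_iter_pow_eq_zero_of_lt i.isLt]
  funext x
  simp

theorem solution_of_shift_operator_power_neg (m : ℕ) (hm : 1 ≤ m) (lam : ℝ)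
    (hlam : lam < 0) (μ : Fin m → ℝ → ℝ) (hμ : ∀ i x, μ i (x + 1) = -μ i x)
    (y : ℝ → ℝ)
    (hy : ∀ x, y x = (∑ i : Fin m, μ i x * x ^ (i : ℕ)) * |lam| ^ x) :
    (shiftMinusLam lam)^[m] y = fun _ => 0 :=
  solution_of_shift_operator_power_neg_general m lam hlam μ hμ y hy
end

section
/- Let a > 0 and n ≥ 0. The determinant of the (n+1)×(n+1) matrix with entries (D + ln a)^i applied to binom(x, j) (the polynomial x(x-1)···(x-j+1)/j!), for 0 ≤ i,j ≤ n, equals 1 for all x. -/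
/-!
Expanding `(D + c)^i = ∑ₘ (i choose m) c^(i-m) Dᵐ` factors the matrix as the product of the
lower unitriangular matrix `((i choose m) c^(i-m))` and the matrix `(Dᵐ binom(x, j))`, which is
upper triangular since `binom(x, j)` has degree `j`, with diagonal entries `j! · (1/j!) = 1`.
-/

/-- The polynomial binomial coefficient `x(x-1)⋯(x-j+1)/j!`. -/
noncomputable def polyBinom (x : ℝ) (j : ℕ) : ℝ :=
  (∏ k ∈ Finset.range j, (x - (k : ℝ))) / Nat.factorial j

/-- The operator `D + ln a`, i.e. `y ↦ y' + (ln a) y`. -/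
noncomputable def DplusLog (a : ℝ) (f : ℝ → ℝ) : ℝ → ℝ :=
  fun x => deriv f x + Real.log a * f x

open Polynomial Finset Matrix
open scoped Nat

namespace Polynomial

variable {R : Type*} [CommRing R]

theorem iterate_derivative_add_smul (c : R) (p : R[X]) (i : ℕ) :
    (fun q => derivative q + c • q)^[i] p =
      ∑ m ∈ range (i + 1), ((i.choose m : R) * c ^ (i - m)) • derivative^[m] p := by
  have hcomm : Commute (derivative : Module.End R R[X]) (c • 1) :=
    (Commute.one_right _).smul_right c
  change (⇑(derivative + c • 1 : Module.End R R[X]))^[i] p = _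
  rw [← Module.End.coe_pow, hcomm.add_pow, LinearMap.sum_apply]
  refine sum_congr rfl fun m _ => ?_
  rw [_root_.smul_pow, one_pow, Module.End.mul_apply, Module.End.mul_apply, Module.End.pow_apply,
    LinearMap.smul_apply, Module.End.one_apply, Module.End.natCast_apply, iterate_derivative_smul,
    iterate_derivative_smul, ← Nat.cast_smul_eq_nsmul R, smul_smul, mul_comm]

theorem iterate_derivative_eq_C_of_natDegree_le {p : R[X]} {k : ℕ} (hp : p.natDegree ≤ k) :
    derivative^[k] p = C ((k ! : R) * p.coeff k) := by
  have hdeg : (derivative^[k] p).natDegree ≤ 0 :=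
    (natDegree_iterate_derivative p k).trans (by omega)
  rw [eq_C_of_natDegree_le_zero hdeg, coeff_iterate_derivative, zero_add, Nat.descFactorial_self,
    nsmul_eq_mul]

end Polynomial

namespace Matrix

variable {R : Type*} [CommRing R] {n : ℕ}

theorem det_choose_mul_pow (c : R) :
    det (of fun i m : Fin n => ((i : ℕ).choose m : R) * c ^ ((i : ℕ) - m)) = 1 := by
  rw [det_of_isLowerTriangular]
  · simp
  · intro i m (him : (i : ℕ) < m)
    simp [Nat.choose_eq_zero_of_lt him]

theorem det_iterate_derivative_add_smul_eval (c x : R) (p : Fin n → R[X]) :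
    det (of fun i j : Fin n => ((fun q => derivative q + c • q)^[i] (p j)).eval x) =
      det (of fun i j : Fin n => (derivative^[i] (p j)).eval x) := by
  have hfactor : (of fun i j : Fin n => ((fun q => derivative q + c • q)^[i] (p j)).eval x) =
      (of fun i m : Fin n => ((i : ℕ).choose m : R) * c ^ ((i : ℕ) - m)) *
        of fun m j : Fin n => (derivative^[m] (p j)).eval x := by
    ext i j
    simp only [of_apply, mul_apply, iterate_derivative_add_smul, eval_finsetSum, eval_smul,
      smul_eq_mul]
    rw [Fin.sum_univ_eq_sum_range (fun m => ((i : ℕ).choose m : R) * c ^ ((i : ℕ) - m) *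
        (derivative^[m] (p j)).eval x)]
    refine sum_subset (range_subset_range.mpr i.isLt) fun m _ hm => ?_
    simp [Nat.choose_eq_zero_of_lt (not_lt.mp (mem_range.not.mp hm))]
  rw [hfactor, det_mul, det_choose_mul_pow, one_mul]

theorem det_iterate_derivative_eval_of_natDegree_le (x : R) (p : Fin n → R[X])
    (hp : ∀ j, (p j).natDegree ≤ j) :
    det (of fun i j : Fin n => (derivative^[i] (p j)).eval x) =
      ∏ j : Fin n, ((j : ℕ)! : R) * (p j).coeff j := by
  rw [det_of_isUpperTriangular]
  · simp [iterate_derivative_eq_C_of_natDegree_le (hp _)]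
  · intro i j (hji : j < i)
    simp [iterate_derivative_eq_zero ((hp j).trans_lt hji)]

end Matrix

section BinomPoly

variable (K : Type*) [Field K]

noncomputable def binomPoly (j : ℕ) : K[X] :=
  C (j ! : K)⁻¹ * descPochhammer K j

theorem binomPoly_eval (x : K) (j : ℕ) :
    (binomPoly K j).eval x = (∏ k ∈ range j, (x - k)) / j ! := by
  rw [binomPoly, eval_mul, eval_C, descPochhammer_eval_eq_prod_range, inv_mul_eq_div]

theorem natDegree_binomPoly_le (j : ℕ) : (binomPoly K j).natDegree ≤ j :=
  (natDegree_C_mul_le _ _).trans (descPochhammer_natDegree K j).le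

theorem factorial_mul_coeff_binomPoly [CharZero K] (j : ℕ) :
    (j ! : K) * (binomPoly K j).coeff j = 1 := by
  have hlead := (monic_descPochhammer K j).coeff_natDegree
  rw [descPochhammer_natDegree] at hlead
  rw [binomPoly, coeff_C_mul, hlead, mul_one,
    mul_inv_cancel₀ (Nat.cast_ne_zero.mpr j.factorial_ne_zero)]

end BinomPoly

theorem iterate_DplusLog_eval (a : ℝ) (q : ℝ[X]) (i : ℕ) :
    (DplusLog a)^[i] (fun t => q.eval t) =
      fun t => ((fun r => derivative r + Real.log a • r)^[i] q).eval t := by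
  have hsemiconj : Function.Semiconj (fun r : ℝ[X] => fun t => r.eval t)
      (fun r => derivative r + Real.log a • r) (DplusLog a) := fun r => by
    funext t
    simp [DplusLog, Polynomial.deriv]
  exact (hsemiconj.iterate_right i q).symm

theorem det_DplusLog_binom_general (n : ℕ) (a : ℝ) (x : ℝ) :
    (Matrix.of fun i j : Fin (n + 1) =>
      (DplusLog a)^[(i : ℕ)] (fun t => polyBinom t (j : ℕ)) x).det = 1 := by
  have hbinom (j : ℕ) : (fun t => polyBinom t j) = fun t => (binomPoly ℝ j).eval t := by
    funext t
    rw [binomPoly_eval, polyBinom]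
  simp only [hbinom, iterate_DplusLog_eval]
  rw [det_iterate_derivative_add_smul_eval, det_iterate_derivative_eval_of_natDegree_le x _
    fun j => natDegree_binomPoly_le ℝ j]
  exact prod_eq_one fun j _ => factorial_mul_coeff_binomPoly ℝ j

theorem det_DplusLog_binom (n : ℕ) (a : ℝ) (ha : 0 < a) (x : ℝ) :
    (Matrix.of fun i j : Fin (n + 1) =>
      (DplusLog a)^[(i : ℕ)] (fun t => polyBinom t (j : ℕ)) x).det = 1 :=
  det_DplusLog_binom_general n a x
end

section
/- For every natural number n and real x, the determinant of the (n+1)×(n+1) matrix with entries binom(x+i, j) for 0 ≤ i, j ≤ n equals 1. -/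
/-!
By the Chu–Vandermonde identity `binom(x + i, j) = ∑ₖ binom(i, k) binom(x, j - k)`, the matrix
factors as the lower unitriangular Pascal matrix `(binom(i, k))` times the upper unitriangular
Toeplitz matrix `(binom(x, j - k))`; both factors have determinant `1`.
-/

open Finset Matrix

theorem polyBinom_eq_choose (x : ℝ) (j : ℕ) : polyBinom x j = Ring.choose x j := by
  rw [Ring.choose_eq_smul, ← Polynomial.aeval_eq_smeval, Polynomial.aeval_def,
    Polynomial.eval₂_eq_eval_map, descPochhammer_map, descPochhammer_eval_eq_prod_range,
    smul_eq_mul, polyBinom, div_eq_inv_mul]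

theorem sum_mul_ite_le_eq_sum_antidiagonal {R : Type*} [NonUnitalNonAssocSemiring R]
    {n j : ℕ} (hj : j < n) (f g : ℕ → R) :
    ∑ k : Fin n, f k * (if (k : ℕ) ≤ j then g (j - k) else 0) =
      ∑ p ∈ antidiagonal j, f p.1 * g p.2 := by
  rw [Fin.sum_univ_eq_sum_range (fun k => f k * (if k ≤ j then g (j - k) else 0)),
    Nat.sum_antidiagonal_eq_sum_range_succ_mk]
  simp only [mul_ite, mul_zero]
  rw [← sum_filter]
  congr 1
  ext k
  simp only [mem_filter, mem_range]
  omega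

def pascalMatrix (R : Type*) [Semiring R] (n : ℕ) : Matrix (Fin n) (Fin n) R :=
  of fun i k => (Nat.choose i k : R)

theorem det_pascalMatrix (R : Type*) [CommRing R] (n : ℕ) : (pascalMatrix R n).det = 1 := by
  rw [det_of_isLowerTriangular]
  · simp [pascalMatrix]
  · intro i k (hik : i < k)
    simp [pascalMatrix, Nat.choose_eq_zero_of_lt hik]

namespace Ring

variable {R : Type*} [CommRing R] [BinomialRing R]

def chooseToeplitzMatrix (r : R) (n : ℕ) : Matrix (Fin n) (Fin n) R :=
  of fun k j => if k ≤ j then choose r (j - k : ℕ) else 0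

theorem det_chooseToeplitzMatrix (r : R) (n : ℕ) : (chooseToeplitzMatrix r n).det = 1 := by
  rw [det_of_isUpperTriangular]
  · simp [chooseToeplitzMatrix]
  · intro k j (hjk : j < k)
    simp [chooseToeplitzMatrix, not_le.mpr hjk]

theorem choose_add_natCast_matrix_eq_mul (r : R) (n : ℕ) :
    (of fun i j : Fin n => choose (r + (i : ℕ)) j) =
      pascalMatrix R n * chooseToeplitzMatrix r n := by
  ext i j
  rw [mul_apply, of_apply, add_comm, add_choose_eq _ (Commute.all _ _)]
  simp only [pascalMatrix, chooseToeplitzMatrix, of_apply, Fin.le_def]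
  rw [sum_mul_ite_le_eq_sum_antidiagonal j.isLt (fun k => (Nat.choose i k : R)) (choose r)]
  simp only [choose_natCast]

theorem det_choose_add_natCast (r : R) (n : ℕ) :
    (of fun i j : Fin n => choose (r + (i : ℕ)) j).det = 1 := by
  rw [choose_add_natCast_matrix_eq_mul, det_mul, det_pascalMatrix, det_chooseToeplitzMatrix,
    mul_one]

end Ring

theorem det_shifted_binom (n : ℕ) (x : ℝ) :
    (Matrix.of fun i j : Fin (n + 1) => polyBinom (x + (i : ℕ)) (j : ℕ)).det = 1 := by
  simp only [polyBinom_eq_choose]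
  exact Ring.det_choose_add_natCast x (n + 1)
end

section
/- Let a > 0, a ≠ 1, and n ≥ 0. The Wronskian W_n(x) = det(d^i/dx^i [binom(x,j) a^x])_{0≤i,j≤n} and the Casoratian C_n(x) = det(binom(x+i, j) a^{x+i})_{0≤i,j≤n} satisfy W_n(x) = a^{-n(n+1)/2} C_n(x) for all real x; in fact W_n(x) = a^{(n+1)x} and C_n(x) = a^{(n+1)x} a^{n(n+1)/2}. -/
open Polynomial Finset

noncomputable def pbNum (j : ℕ) : ℝ[X] := ∏ k ∈ Finset.range j, (X - C (k : ℝ))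

lemma pbNum_monic (j : ℕ) : (pbNum j).Monic :=
  monic_prod_of_monic _ _ fun k _ => monic_X_sub_C _

lemma pbNum_natDegree (j : ℕ) : (pbNum j).natDegree = j := by
  rw [pbNum, natDegree_prod_of_monic (range j) (fun k => X - C (k:ℝ)) (fun k _ => monic_X_sub_C _)]
  rw [Finset.sum_congr rfl fun x _ => natDegree_X_sub_C ((x:ℕ):ℝ)]; simp

lemma pbNum_eval (t : ℝ) (j : ℕ) : (pbNum j).eval t = ∏ k ∈ Finset.range j, (t - (k : ℝ)) := by
  simp [pbNum, eval_prod]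

noncomputable def pbPoly (j : ℕ) : ℝ[X] := C ((Nat.factorial j : ℝ))⁻¹ * pbNum j

lemma pbPoly_eval (t : ℝ) (j : ℕ) : (pbPoly j).eval t = polyBinom t j := by
  simp [pbPoly, pbNum_eval, polyBinom, div_eq_inv_mul]

lemma pbPoly_natDegree (j : ℕ) : (pbPoly j).natDegree = j := by
  rw [pbPoly, natDegree_C_mul (by positivity), pbNum_natDegree]

lemma iterate_derivative_pbPoly_self (j : ℕ) :
    derivative^[j] (pbPoly j) = C 1 := by
  rw [pbPoly, iterate_derivative_C_mul]
  have h1 : (derivative^[j] (pbNum j)).natDegree = 0 := by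
    have := natDegree_iterate_derivative (pbNum j) j
    rw [pbNum_natDegree] at this; omega
  have h2 : derivative^[j] (pbNum j) = C ((derivative^[j] (pbNum j)).coeff 0) :=
    (eq_C_of_natDegree_eq_zero h1)
  rw [h2, coeff_iterate_derivative]
  have : (pbNum j).coeff j = 1 := by
    have := (pbNum_monic j).leadingCoeff
    rwa [leadingCoeff, pbNum_natDegree] at this
  simp only [zero_add, this, Nat.descFactorial_self, nsmul_eq_mul, mul_one]
  rw [← C_mul, inv_mul_cancel₀ (by positivity)]

lemma iterate_derivative_pbPoly_zero {j k : ℕ} (h : j < k) :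
    derivative^[k] (pbPoly j) = 0 :=
  iterate_derivative_eq_zero (by rw [pbPoly_natDegree]; exact h)

noncomputable def shiftD (c : ℝ) : Module.End ℝ ℝ[X] := Polynomial.derivative + c • 1

lemma shiftD_apply (c : ℝ) (q : ℝ[X]) : shiftD c q = derivative q + c • q := by
  simp [shiftD]

lemma iteratedDeriv_eval_mul_rpow {a : ℝ} (ha : 0 < a) (i : ℕ) (q : ℝ[X]) (x : ℝ) :
    iteratedDeriv i (fun t => q.eval t * a ^ t) x
      = (((shiftD (Real.log a)) ^ i) q).eval x * a ^ x := by
  induction i generalizing q x with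
  | zero => simp
  | succ i ih =>
    rw [iteratedDeriv_succ']
    have hd : deriv (fun t => q.eval t * a ^ t)
        = fun t => ((shiftD (Real.log a)) q).eval t * a ^ t := by
      funext t
      have h1 : HasDerivAt (fun t => q.eval t * a ^ t)
          (q.derivative.eval t * a ^ t + q.eval t * (a ^ t * Real.log a)) t :=
        (q.hasDerivAt t).mul ((Real.hasStrictDerivAt_const_rpow ha t).hasDerivAt)
      rw [h1.deriv, shiftD_apply]
      simp only [eval_add, eval_smul, smul_eq_mul]
      ring
    rw [hd, ih, pow_succ, Module.End.mul_apply]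

lemma shiftD_pow_apply (c : ℝ) (i : ℕ) (q : ℝ[X]) :
    ((shiftD c) ^ i) q
      = ∑ k ∈ range (i+1), ((i.choose k : ℝ) * c ^ (i-k)) • derivative^[k] q := by
  have hcomm : Commute (Polynomial.derivative : Module.End ℝ ℝ[X]) (c • 1) :=
    (Commute.one_right _).smul_right c
  rw [shiftD, hcomm.add_pow]
  rw [LinearMap.sum_apply]
  refine Finset.sum_congr rfl fun k hk => ?_
  rw [_root_.smul_pow, one_pow, Module.End.mul_apply, Module.End.mul_apply,
    Module.End.natCast_apply, LinearMap.smul_apply, Module.End.one_apply, map_smul, map_nsmul,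
    Module.End.pow_apply]
  rw [← Nat.cast_smul_eq_nsmul ℝ, smul_smul, mul_comm]

lemma wronskian_det {n : ℕ} {a : ℝ} (ha : 0 < a) (x : ℝ) :
    (Matrix.of fun i j : Fin (n + 1) =>
        iteratedDeriv (i : ℕ) (fun t => polyBinom t (j : ℕ) * a ^ t) x).det
      = a ^ ((n + 1 : ℕ) * x) := by
  set c := Real.log a with hc
  set L : Matrix (Fin (n+1)) (Fin (n+1)) ℝ :=
    Matrix.of fun i k : Fin (n+1) => (((i:ℕ).choose (k:ℕ) : ℝ) * c ^ ((i:ℕ)-(k:ℕ))) with hL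
  set P : Matrix (Fin (n+1)) (Fin (n+1)) ℝ :=
    Matrix.of fun k j : Fin (n+1) => (derivative^[(k:ℕ)] (pbPoly (j:ℕ))).eval x with hP
  have hM : (Matrix.of fun i j : Fin (n + 1) =>
      iteratedDeriv (i : ℕ) (fun t => polyBinom t (j : ℕ) * a ^ t) x)
      = (a ^ x) • (L * P) := by
    ext i j
    have hfun : (fun t => polyBinom t (j : ℕ) * a ^ t)
        = fun t => (pbPoly (j:ℕ)).eval t * a ^ t := by
      funext t; rw [pbPoly_eval]
    rw [Matrix.of_apply, hfun, iteratedDeriv_eval_mul_rpow ha, shiftD_pow_apply,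
      Matrix.smul_apply, Matrix.mul_apply, eval_finset_sum]
    have hext : ∑ k ∈ range ((i:ℕ)+1),
          (((((i:ℕ)).choose k : ℝ) * c ^ ((i:ℕ)-k)) • derivative^[k] (pbPoly (j:ℕ))).eval x
        = ∑ k ∈ range (n+1),
          (((((i:ℕ)).choose k : ℝ) * c ^ ((i:ℕ)-k)) • derivative^[k] (pbPoly (j:ℕ))).eval x := by
      refine Finset.sum_subset (Finset.range_subset_range.mpr (by have := i.isLt; omega)) fun k _ hk => ?_
      have : (i:ℕ) < k := by simp only [Finset.mem_range] at hk ⊢; omega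
      rw [Nat.choose_eq_zero_of_lt this]
      simp
    rw [hext, ← Fin.sum_univ_eq_sum_range (fun k =>
      (((((i:ℕ)).choose k : ℝ) * c ^ ((i:ℕ)-k)) • derivative^[k] (pbPoly (j:ℕ))).eval x) (n+1)]
    rw [smul_eq_mul, Finset.mul_sum, Finset.sum_mul]
    refine Finset.sum_congr rfl fun k _ => ?_
    simp only [eval_smul, smul_eq_mul, hL, hP, Matrix.of_apply]
    ring
  rw [hM, Matrix.det_smul, Matrix.det_mul]
  have hdetL : L.det = 1 := by
    rw [Matrix.det_of_lowerTriangular L (fun i j hij => by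
      simp only [hL, Matrix.of_apply]
      rw [Nat.choose_eq_zero_of_lt (by exact_mod_cast hij), Nat.cast_zero, zero_mul])]
    simp [hL]
  have hdetP : P.det = 1 := by
    rw [Matrix.det_of_upperTriangular (show P.BlockTriangular id from fun i j hij => by
      simp only [hP, Matrix.of_apply]
      rw [iterate_derivative_pbPoly_zero (show (j:ℕ) < (i:ℕ) from hij), eval_zero])]
    simp [hP, iterate_derivative_pbPoly_self]
  rw [hdetL, hdetP, mul_one, mul_one]
  rw [show ((n+1:ℕ):ℝ) * x = x * ((n+1:ℕ):ℝ) from mul_comm _ _, Real.rpow_mul ha.le,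
    Real.rpow_natCast]
  simp

lemma casoratian_det {n : ℕ} {a : ℝ} (ha : 0 < a) (x : ℝ) :
    (Matrix.of fun i j : Fin (n + 1) =>
        polyBinom (x + (i : ℕ)) (j : ℕ) * a ^ (x + (i : ℕ))).det
      = a ^ ((n + 1 : ℕ) * x) * a ^ (((n * (n + 1) / 2 : ℕ) : ℝ)) := by
  have h1 : (Matrix.of fun i j : Fin (n + 1) =>
        polyBinom (x + (i : ℕ)) (j : ℕ) * a ^ (x + (i : ℕ)))
      = Matrix.of fun i j : Fin (n+1) => (a ^ (x + (i:ℕ))) *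
          (Matrix.of fun i j : Fin (n+1) =>
            ((Nat.factorial (j:ℕ) : ℝ))⁻¹ * (pbNum (j:ℕ)).eval (x + (i:ℕ))) i j := by
    ext i j
    simp only [Matrix.of_apply, pbNum_eval, polyBinom]
    field_simp
  rw [h1, Matrix.det_mul_column, show (Matrix.of fun i j : Fin (n+1) => ((Nat.factorial (j:ℕ) : ℝ))⁻¹ * (pbNum (j:ℕ)).eval (x + (i:ℕ))).det = _ from Matrix.det_mul_row _ _]
  have h2 : (Matrix.of fun (i j : Fin (n+1)) => (pbNum (j:ℕ)).eval (x + (i:ℕ))).det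
      = (Nat.superFactorial n : ℝ) := by
    rw [← Matrix.det_eval_matrixOfPolynomials_eq_det_vandermonde (fun i : Fin (n+1) => x + (i:ℕ))
      (fun j => pbNum (j:ℕ)) (fun j => pbNum_natDegree _) (fun j => pbNum_monic _)]
    have : (fun i : Fin (n+1) => x + ((i:ℕ):ℝ)) = fun i : Fin (n+1) => ((i:ℕ):ℝ) + x := by
      funext i; ring
    rw [this, Matrix.det_vandermonde_add, Matrix.det_vandermonde_id_eq_superFactorial]
  have hsf : (∏ j : Fin (n+1), (Nat.factorial (j:ℕ) : ℝ)) = (Nat.superFactorial n : ℝ) := by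
    rw [← Nat.cast_prod]
    congr 1
    rw [Fin.prod_univ_eq_prod_range (fun j => Nat.factorial j) (n+1),
      Nat.prod_range_succ_factorial]
  have h3 : (∏ j : Fin (n+1), ((Nat.factorial (j:ℕ) : ℝ))⁻¹) = ((Nat.superFactorial n : ℝ))⁻¹ := by
    rw [Finset.prod_inv_distrib, hsf]
  have h4 : (∏ i : Fin (n+1), a ^ (x + ((i:ℕ):ℝ)))
      = a ^ ((n + 1 : ℕ) * x) * a ^ (((n * (n + 1) / 2 : ℕ) : ℝ)) := by
    have heach : ∀ i : Fin (n+1), a ^ (x + ((i:ℕ):ℝ)) = a ^ x * a ^ ((i:ℕ)) := fun i => by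
      rw [Real.rpow_add ha, Real.rpow_natCast]
    rw [Finset.prod_congr rfl fun i _ => heach i, Finset.prod_mul_distrib, Finset.prod_const,
      Finset.prod_pow_eq_pow_sum]
    congr 1
    · rw [Finset.card_univ, Fintype.card_fin,
        show ((n+1:ℕ):ℝ) * x = x * ((n+1:ℕ):ℝ) from mul_comm _ _, Real.rpow_mul ha.le,
        Real.rpow_natCast]
    · have hsum : (∑ i : Fin (n+1), (i:ℕ)) = n*(n+1)/2 := by
        rw [Fin.sum_univ_eq_sum_range (fun i => i) (n+1), Finset.sum_range_id,
          Nat.add_sub_cancel, Nat.mul_comm]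
      rw [hsum, ← Real.rpow_natCast a (n*(n+1)/2)]
  rw [show Matrix.det (fun i j : Fin (n+1) => (pbNum (j:ℕ)).eval (x + ((i:ℕ):ℝ)))
      = (Nat.superFactorial n : ℝ) from h2, h3, h4]
  have hne : (Nat.superFactorial n : ℝ) ≠ 0 := by rw [← hsf]; positivity
  field_simp

theorem wronskian_casoratian_binom_exp (n : ℕ) (a : ℝ) (ha : 0 < a) (ha1 : a ≠ 1)
    (x : ℝ) :
    ((Matrix.of fun i j : Fin (n + 1) =>
        iteratedDeriv (i : ℕ) (fun t => polyBinom t (j : ℕ) * a ^ t) x).det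
      = a ^ (-((n * (n + 1) / 2 : ℕ) : ℝ)) *
        (Matrix.of fun i j : Fin (n + 1) =>
          polyBinom (x + (i : ℕ)) (j : ℕ) * a ^ (x + (i : ℕ))).det) ∧
    ((Matrix.of fun i j : Fin (n + 1) =>
        iteratedDeriv (i : ℕ) (fun t => polyBinom t (j : ℕ) * a ^ t) x).det
      = a ^ ((n + 1 : ℕ) * x)) ∧
    ((Matrix.of fun i j : Fin (n + 1) =>
        polyBinom (x + (i : ℕ)) (j : ℕ) * a ^ (x + (i : ℕ))).det
      = a ^ ((n + 1 : ℕ) * x) * a ^ (((n * (n + 1) / 2 : ℕ) : ℝ))) := by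
  refine ⟨?_, wronskian_det ha x, casoratian_det ha x⟩
  rw [wronskian_det ha x, casoratian_det ha x,
    mul_comm (a ^ (((n + 1 : ℕ) : ℝ) * x)) (a ^ (((n * (n + 1) / 2 : ℕ) : ℝ))), ← mul_assoc,
    ← Real.rpow_add ha, neg_add_cancel, Real.rpow_zero, one_mul]
end
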